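/- Under the conditions of the previous context with n ≥ 2, if either γ > 0 and u̲ < d/(α+γλ_max), or γ < 0, α + γλ_min > 0 and u̲ < d/(α+γλ_min), then the equilibrium (0, u̲·1) of the coupled dynamics is locally exponentially stable: all 2N eigenvalues of the block-diagonal Jacobian diag(−dI + u̲(αI+γA), −I) have negative real part. -/
import Mathlib


open Matrix

private lemma mem_spec_iff_det {n : Type*} [Fintype n] [DecidableEq n]
    (M : Matrix n n ℝ) (μ : ℝ) :
    μ ∈ spectrum ℝ M ↔ (μ • (1 : Matrix n n ℝ) - M).det = 0 := by
  rw [spectrum.mem_iff, Matrix.isUnit_iff_isUnit_det, isUnit_iff_ne_zero, not_ne_iff,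
    Algebra.algebraMap_eq_smul_one]

/-- If either `γ > 0` and `u̲ < d/(α+γλmax)`, or `γ < 0`, `α + γλmin > 0` and
`u̲ < d/(α+γλmin)`, then the equilibrium `(0, u̲·1)` of the coupled dynamics is
locally exponentially stable: all `2N` eigenvalues of the block-diagonal
Jacobian `diag(−dI + u̲(αI+γA), −I)` are negative. -/
theorem coupled_origin_stability {N : ℕ} (G : SimpleGraph (Fin N))
    [DecidableRel G.Adj] (hG : G.Connected)
    (A : Matrix (Fin N) (Fin N) ℝ) (hA : A = G.adjMatrix ℝ)
    (d α γ ulow lmax lmin : ℝ) (hd : 0 < d) (hα : 0 ≤ α) (hu : 0 < ulow)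
    (hlmaxmem : lmax ∈ spectrum ℝ A) (hlmax : ∀ μ ∈ spectrum ℝ A, μ ≤ lmax)
    (hlminmem : lmin ∈ spectrum ℝ A) (hlmin : ∀ μ ∈ spectrum ℝ A, lmin ≤ μ)
    (hcase : (0 < γ ∧ ulow < d / (α + γ * lmax)) ∨
             (γ < 0 ∧ 0 < α + γ * lmin ∧ ulow < d / (α + γ * lmin)))
    (J : Matrix (Fin N) (Fin N) ℝ)
    (hJ : J = (-d) • (1 : Matrix (Fin N) (Fin N) ℝ)
            + ulow • (α • (1 : Matrix (Fin N) (Fin N) ℝ) + γ • A)) :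
    ∀ μ ∈ spectrum ℝ
        (Matrix.fromBlocks J 0 0 (-(1 : Matrix (Fin N) (Fin N) ℝ))), μ < 0 := by
  have hγ : γ ≠ 0 := by rcases hcase with ⟨h, _⟩ | ⟨h, _, _⟩ <;> [exact ne_of_gt h; exact ne_of_lt h]
  have ht : ulow * γ ≠ 0 := mul_ne_zero (ne_of_gt hu) hγ
  intro μ hμ
  rw [mem_spec_iff_det] at hμ
  -- split the block determinant
  have hblock : μ • (1 : Matrix (Fin N ⊕ Fin N) (Fin N ⊕ Fin N) ℝ)
      - Matrix.fromBlocks J 0 0 (-(1 : Matrix (Fin N) (Fin N) ℝ))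
      = Matrix.fromBlocks (μ • 1 - J) 0 0 (μ • 1 - (-1)) := by
    rw [← Matrix.fromBlocks_one, Matrix.fromBlocks_smul, sub_eq_add_neg,
      Matrix.fromBlocks_neg, Matrix.fromBlocks_add]
    simp [sub_eq_add_neg]
  rw [hblock, Matrix.det_fromBlocks_zero₂₁] at hμ
  rcases mul_eq_zero.mp hμ with h1 | h2
  · -- eigenvalue of J
    have hJμ : μ ∈ spectrum ℝ J := (mem_spec_iff_det J μ).mpr h1
    set c : ℝ := ulow * α - d with hc
    set t : ℝ := ulow * γ with htdef
    have hJ' : J = c • (1 : Matrix (Fin N) (Fin N) ℝ) + t • A := by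
      rw [hJ, hc, htdef]
      module
    have hfac : μ • (1 : Matrix (Fin N) (Fin N) ℝ) - J
        = t • (((μ - c) / t) • (1 : Matrix (Fin N) (Fin N) ℝ) - A) := by
      rw [hJ', smul_sub, smul_smul, mul_div_cancel₀ _ ht]
      module
    rw [mem_spec_iff_det, hfac, Matrix.det_smul, mul_eq_zero] at hJμ
    have hν : (μ - c) / t ∈ spectrum ℝ A := by
      rw [mem_spec_iff_det]
      rcases hJμ with h | h
      · exact absurd h (pow_ne_zero _ ht)
      · exact h
    set ν : ℝ := (μ - c) / t with hν'
    have hμeq : μ = c + t * ν := by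
      rw [hν', mul_div_cancel₀ _ ht]; ring
    rcases hcase with ⟨hγpos, hub⟩ | ⟨hγneg, hpos, hub⟩
    · have hle : ν ≤ lmax := hlmax _ hν
      have hpos : 0 < α + γ * lmax := by
        by_contra hle'
        push_neg at hle'
        have : d / (α + γ * lmax) ≤ 0 := div_nonpos_of_nonneg_of_nonpos (le_of_lt hd) hle'
        linarith
      have : ulow * (α + γ * lmax) < d := (lt_div_iff₀ hpos).mp hub
      rw [hμeq, hc, htdef]
      nlinarith [mul_pos hu hγpos]
    · have hge : lmin ≤ ν := hlmin _ hν
      have : ulow * (α + γ * lmin) < d := (lt_div_iff₀ hpos).mp hub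
      rw [hμeq, hc, htdef]
      nlinarith [mul_pos hu (neg_pos.mpr hγneg)]
  · -- eigenvalue of -I
    have hNpos : 0 < N := by
      have : Nonempty (Fin N) := hG.nonempty
      exact Fin.pos_iff_nonempty.mpr this
    have : μ • (1 : Matrix (Fin N) (Fin N) ℝ) - (-1) = (μ + 1) • 1 := by module
    rw [this, Matrix.det_smul, Matrix.det_one, mul_one] at h2
    have : μ + 1 = 0 := by
      rw [Fintype.card_fin] at h2
      exact pow_eq_zero_iff hNpos.ne' |>.mp h2
    linarith
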